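/- For real x ≥ 1, ∑_{n : α(n) ≤ x} Λ(n)·⌊x/α(n)⌋ = log ∏_{n ≤ x} a_n, where Λ is the von Mangoldt function. -/

import Mathlib

/-!
Since the Fibonacci numbers form a strong divisibility sequence, `n ∣ a_m ↔ α(n) ∣ m`, so
`⌊x/α(n)⌋` counts the `m ≤ x` with `n ∣ a_m`. Exchanging the order of summation turns the left
side into `∑_{m ≤ x} ∑_{d ∣ a_m} Λ(d) = ∑_{m ≤ x} log a_m`. The rank `α(n)` exists because
`(a_k, a_{k+1}) mod n` is the orbit of `(0, 1)` under the invertible map `(a, b) ↦ (b, a + b)`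
of a finite set, hence returns to `(0, 1)`.
-/

open Finset ArithmeticFunction

noncomputable def fibAlpha (n : ℕ) : ℕ := sInf {m | 0 < m ∧ n ∣ Nat.fib m}

theorem Nat.IsStrongDvdSequence.dvd_iff_sInf_dvd {f : ℕ → ℕ} (hf : IsStrongDvdSequence f)
    {n : ℕ} (hn : ∃ m, 0 < m ∧ n ∣ f m) (m : ℕ) :
    n ∣ f m ↔ sInf {k | 0 < k ∧ n ∣ f k} ∣ m := by
  obtain ⟨hpos, hdvd⟩ : 0 < sInf {k | 0 < k ∧ n ∣ f k} ∧ n ∣ f (sInf {k | 0 < k ∧ n ∣ f k}) :=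
    Nat.sInf_mem hn
  set α := sInf {k | 0 < k ∧ n ∣ f k}
  refine ⟨fun h => ?_, fun h => hdvd.trans (hf.isDvdSequence α m h)⟩
  have hgcd : n ∣ f (α.gcd m) := hf α m ▸ Nat.dvd_gcd hdvd h
  have hle : α ≤ α.gcd m := Nat.sInf_le ⟨Nat.gcd_pos_of_pos_left m hpos, hgcd⟩
  rw [← le_antisymm (Nat.gcd_le_left m hpos) hle]
  exact Nat.gcd_dvd_right α m

section FibMod

variable {R : Type*} [AddGroupWithOne R]

def fibStep (p : R × R) : R × R := (p.2, p.1 + p.2)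

theorem fibStep_injective : Function.Injective (fibStep : R × R → R × R) := by
  rintro ⟨a, b⟩ ⟨c, d⟩ h
  simp only [fibStep, Prod.mk.injEq] at h
  obtain ⟨rfl, h⟩ := h
  rw [add_right_cancel h]

theorem fibStep_iterate (k : ℕ) :
    fibStep^[k] ((0, 1) : R × R) = ((Nat.fib k : R), (Nat.fib (k + 1) : R)) := by
  induction k with
  | zero => simp
  | succ k ih =>
    rw [Function.iterate_succ_apply', ih, fibStep, Nat.fib_add_two]
    push_cast
    rfl

theorem exists_pos_fib_cast_eq_zero [Finite R] : ∃ m, 0 < m ∧ (Nat.fib m : R) = 0 := by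
  obtain ⟨m, hm, hper⟩ := fibStep_injective.mem_periodicPts ((0, 1) : R × R)
  refine ⟨m, hm, ?_⟩
  have := congrArg Prod.fst hper.eq
  rwa [fibStep_iterate] at this

end FibMod

theorem exists_pos_dvd_fib {n : ℕ} (hn : n ≠ 0) : ∃ m, 0 < m ∧ n ∣ Nat.fib m := by
  have : NeZero n := ⟨hn⟩
  simpa only [ZMod.natCast_eq_zero_iff] using exists_pos_fib_cast_eq_zero (R := ZMod n)

theorem dvd_fib_iff_fibAlpha_dvd {n : ℕ} (hn : n ≠ 0) (m : ℕ) :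
    n ∣ Nat.fib m ↔ fibAlpha n ∣ m :=
  Nat.isStrongDvdSequence_fib.dvd_iff_sInf_dvd (exists_pos_dvd_fib hn) m

theorem mem_divisors_fib_iff {N m d : ℕ} (hm : m ∈ Icc 1 N) :
    (d ∈ {n ∈ Icc 1 (Nat.fib N) | fibAlpha n ≤ N} ∧ fibAlpha d ∣ m) ↔
      d ∈ (Nat.fib m).divisors := by
  obtain ⟨hm1, hmN⟩ := mem_Icc.mp hm
  have hfib : Nat.fib m ≠ 0 := (Nat.fib_pos.mpr hm1).ne'
  simp only [mem_filter, mem_Icc, Nat.mem_divisors, and_iff_left hfib]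
  constructor
  · rintro ⟨⟨⟨hd, -⟩, -⟩, hα⟩
    exact (dvd_fib_iff_fibAlpha_dvd (by omega) m).mpr hα
  · intro hd
    have hd0 : d ≠ 0 := by rintro rfl; exact hfib (zero_dvd_iff.mp hd)
    have hα := (dvd_fib_iff_fibAlpha_dvd hd0 m).mp hd
    exact ⟨⟨⟨by omega, (Nat.le_of_dvd (by omega) hd).trans (Nat.fib_mono hmN)⟩,
      (Nat.le_of_dvd hm1 hα).trans hmN⟩, hα⟩

theorem vonMangoldt_sum_fib_general (x : ℝ) :
    ∑ n ∈ (Icc 1 (Nat.fib ⌊x⌋₊)).filter (fun n => fibAlpha n ≤ ⌊x⌋₊),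
        Λ n * (⌊x⌋₊ / fibAlpha n : ℕ)
      = Real.log (∏ n ∈ Icc 1 ⌊x⌋₊, (Nat.fib n : ℝ)) := by
  set N := ⌊x⌋₊
  have hcount (d : ℕ) :
      Λ d * (N / fibAlpha d : ℕ) = ∑ _m ∈ {m ∈ Icc 1 N | fibAlpha d ∣ m}, Λ d := by
    rw [sum_const, nsmul_eq_mul, mul_comm,
      show Icc 1 N = Ioc 0 N from Icc_add_one_left_eq_Ioc 0 N, Nat.Ioc_filter_dvd_card_eq_div]
  have hfib : ∀ m ∈ Icc 1 N, (Nat.fib m : ℝ) ≠ 0 := fun m hm =>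
    Nat.cast_ne_zero.mpr (Nat.fib_pos.mpr (mem_Icc.mp hm).1).ne'
  simp only [hcount, Real.log_prod hfib, ← vonMangoldt_sum]
  exact sum_comm' fun d m => by
    constructor
    · rintro ⟨hd, hm⟩
      rw [mem_filter] at hm
      exact ⟨(mem_divisors_fib_iff hm.1).mp ⟨hd, hm.2⟩, hm.1⟩
    · rintro ⟨hd, hm⟩
      obtain ⟨hd', hα⟩ := (mem_divisors_fib_iff hm).mpr hd
      exact ⟨hd', mem_filter.mpr ⟨hm, hα⟩⟩

theorem vonMangoldt_sum_fib (x : ℝ) (hx : 1 ≤ x) :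
    ∑ n ∈ (Icc 1 (Nat.fib ⌊x⌋₊)).filter (fun n => fibAlpha n ≤ ⌊x⌋₊),
        Λ n * (⌊x⌋₊ / fibAlpha n : ℕ)
      = Real.log (∏ n ∈ Icc 1 ⌊x⌋₊, (Nat.fib n : ℝ)) :=
  vonMangoldt_sum_fib_general x
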